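/- Let m ≥ 3 and let f be an automorphism of the Hamming graph H(n,m) fixing a vertex x and fixing every neighbor of x pointwise. Then f is the identity automorphism. -/

import Mathlib

/-!
Induct on the Hamming distance from `x`. If `v` is at distance at least two, reset one of two
coordinates `i ≠ j` in which `v` differs from `x` to the value of `x`: this gives vertices `w₁, w₂`
closer to `x`, hence fixed by `f`. Two vertices differing in exactly two coordinates have exactly
two common neighbours, here `v` and the vertex `z` obtained by resetting both coordinates. As `z`
is closer to `x` it is fixed too, so `f v`, a common neighbour of `w₁` and `w₂`, must be `v`.
-/

/-- The Hamming graph `H(n,m)`: vertices are `n`-tuples over `Fin m`,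
adjacent iff they differ in exactly one coordinate. -/
def hammingGraph (n m : ℕ) : SimpleGraph (Fin n → Fin m) where
  Adj x y := hammingDist x y = 1
  symm := ⟨by intro x y h; rwa [hammingDist_comm]⟩
  loopless := ⟨by intro x h; simp [hammingDist_self] at h⟩

open Function

section HammingDist

variable {ι : Type*} {β : ι → Type*} [Fintype ι] [∀ i, DecidableEq (β i)]

theorem hammingDist_eq_one_iff {u w : ∀ i, β i} :
    hammingDist u w = 1 ↔ ∃ i, u i ≠ w i ∧ ∀ k, k ≠ i → u k = w k := by
  simp [hammingDist, Finset.card_eq_one, Finset.eq_singleton_iff_unique_mem, not_imp_comm]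

variable [DecidableEq ι]

theorem hammingDist_update_self {v : ∀ i, β i} {i : ι} {a : β i} (ha : a ≠ v i) :
    hammingDist v (update v i a) = 1 :=
  hammingDist_eq_one_iff.mpr ⟨i, by simpa using ha.symm, fun k hk => by simp [hk]⟩

theorem hammingDist_update_add_one {x v : ∀ i, β i} {i : ι} (h : x i ≠ v i) :
    hammingDist x (update v i (x i)) + 1 = hammingDist x v := by
  have : ({k | x k ≠ update v i (x i) k} : Finset ι) =
      ({k | x k ≠ v k} : Finset ι).erase i := by
    ext k
    rcases eq_or_ne k i with rfl | hk <;> simp [*]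
  rw [hammingDist, this, Finset.card_erase_add_one (by simpa using h), hammingDist]

theorem eq_or_eq_of_hammingDist_update_eq_one {u v : ∀ i, β i} {i j : ι} (hij : i ≠ j)
    {a : β i} {b : β j} (ha : a ≠ v i) (hb : b ≠ v j)
    (hi : hammingDist u (update v i a) = 1) (hj : hammingDist u (update v j b) = 1) :
    u = v ∨ u = update (update v i a) j b := by
  obtain ⟨c, -, hc⟩ := hammingDist_eq_one_iff.mp hi
  obtain ⟨c', -, hc'⟩ := hammingDist_eq_one_iff.mp hj
  have h_mem : ∀ k, update v i a k ≠ update v j b k → k = c ∨ k = c' := by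
    intro k hk
    by_contra! h
    exact hk ((hc k h.1).symm.trans (hc' k h.2))
  obtain rfl | rfl := h_mem i (by simpa [hij] using ha)
  · obtain rfl : j = c' := (h_mem j (by simpa [hij.symm] using hb.symm)).resolve_left hij.symm
    left
    funext k
    rcases eq_or_ne k i with rfl | hki
    · simpa [hij] using hc' k hij
    · simpa [hki] using hc k hki
  · obtain rfl : j = c := (h_mem j (by simpa [hij.symm] using hb.symm)).resolve_right hij.symm
    right
    funext k
    rcases eq_or_ne k j with rfl | hkj
    · simpa using hc' k hij.symm
    · simpa [hkj] using hc k hkj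

end HammingDist

theorem hammingGraph.apply_eq_self_of_forall_hammingDist_lt {n m : ℕ}
    (f : hammingGraph n m ≃g hammingGraph n m) {x v : Fin n → Fin m}
    (hv : 2 ≤ hammingDist x v) (hf : ∀ w, hammingDist x w < hammingDist x v → f w = w) :
    f v = v := by
  obtain ⟨i, hi, j, hj, hij⟩ := Finset.one_lt_card.mp hv
  simp only [Finset.mem_filter, Finset.mem_univ, true_and] at hi hj
  set w₁ := update v i (x i)
  set w₂ := update v j (x j)
  set z := update w₁ j (x j)
  have hw₁ : hammingDist x w₁ + 1 = hammingDist x v := hammingDist_update_add_one hi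
  have hw₂ : hammingDist x w₂ + 1 = hammingDist x v := hammingDist_update_add_one hj
  have hz : hammingDist x z + 1 = hammingDist x w₁ :=
    hammingDist_update_add_one (by simpa [w₁, hij.symm] using hj)
  have hfw₁ : (hammingGraph n m).Adj (f v) w₁ := by
    rw [← hf w₁ (by omega)]
    exact f.map_adj_iff.mpr (hammingDist_update_self hi)
  have hfw₂ : (hammingGraph n m).Adj (f v) w₂ := by
    rw [← hf w₂ (by omega)]
    exact f.map_adj_iff.mpr (hammingDist_update_self hj)
  refine (eq_or_eq_of_hammingDist_update_eq_one hij hi hj hfw₁ hfw₂).resolve_right fun hfv => ?_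
  have hvz : v = z := f.injective (hfv.trans (hf z (by omega)).symm)
  rw [hvz] at hw₁
  omega

theorem hammingGraph_rigid_stabilizer_general (n m : ℕ)
    (f : hammingGraph n m ≃g hammingGraph n m) (x : Fin n → Fin m)
    (hx : f x = x) (hN : ∀ y ∈ (hammingGraph n m).neighborSet x, f y = y) :
    ∀ v : Fin n → Fin m, f v = v := by
  intro v
  induction hd : hammingDist x v using Nat.strong_induction_on generalizing v with
  | _ d ih =>
  obtain h | h | h : d = 0 ∨ d = 1 ∨ 2 ≤ d := by omega
  · rw [← hammingDist_eq_zero.mp (hd.trans h), hx]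
  · exact hN v (hd.trans h)
  · exact hammingGraph.apply_eq_self_of_forall_hammingDist_lt f (hd ▸ h)
      fun w hw => ih _ (hd ▸ hw) w rfl

/-- For `m ≥ 3`, an automorphism of `H(n,m)` fixing a vertex `x` and all of
its neighbours is the identity. -/
theorem hammingGraph_rigid_stabilizer (n m : ℕ) (hm : 3 ≤ m)
    (f : hammingGraph n m ≃g hammingGraph n m) (x : Fin n → Fin m)
    (hx : f x = x) (hN : ∀ y ∈ (hammingGraph n m).neighborSet x, f y = y) :
    ∀ v : Fin n → Fin m, f v = v :=
  hammingGraph_rigid_stabilizer_general n m f x hx hN
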